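/- Consider a run of Threshold-Swapping with precision ε > 0 and threshold τ ≥ 0 on a matroid M of rank k, and let OPT be an independent subset of the streamed elements maximizing f. Let F be the set of streamed elements that failed the threshold test and S, S' the sets held at termination. Then w(OPT \ (S' ∪ F)) ≤ 2·w(S), where w is extended linearly to sets (w(T) := Σ_{e ∈ T} w(e)). -/

import Mathlib

open Finset

attribute [local instance] Classical.propDecidable

universe u

/-- A matroid on a ground set `α`, given as a nonempty, downward closed family of
finite independent sets satisfying the augmentation property. -/
structure MatroidOn (α : Type u) where
  Indep : Finset α → Prop
  nonempty : ∃ A, Indep A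
  subset_indep : ∀ ⦃A B : Finset α⦄, A ⊆ B → Indep B → Indep A
  augment : ∀ ⦃A B : Finset α⦄, Indep A → Indep B → A.card < B.card →
    ∃ e ∈ B, e ∉ A ∧ Indep (insert e A)

/-- Submodularity of a set function. -/
def SubmodularFn {α : Type u} [DecidableEq α] (f : Finset α → ℝ) : Prop :=
  ∀ X Y : Finset α, X ⊆ Y → ∀ e, e ∉ Y →
    f (insert e Y) - f Y ≤ f (insert e X) - f X

/-- Monotonicity of a set function. -/
def MonotoneFn {α : Type u} (f : Finset α → ℝ) : Prop :=
  ∀ X Y : Finset α, X ⊆ Y → f X ≤ f Y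

variable {α : Type u} [DecidableEq α]

/-- The marginal gain `f(e | T) = f (T ∪ {e}) - f T`. -/
def marg (f : Finset α → ℝ) (T : Finset α) (e : α) : ℝ := f (insert e T) - f T

/-- State of the `Threshold-Swapping` algorithm: the current solution `S`, the set `S'`
of all elements ever added to the solution, the set `F` of elements that failed the
threshold test, and the weights `w` assigned so far. -/
structure TSState (α : Type u) where
  S : Finset α
  S' : Finset α
  F : Finset α
  w : α → ℝ

/-- Initial state of the `Threshold-Swapping` algorithm. -/
def TSState.start (α : Type u) : TSState α := ⟨∅, ∅, ∅, fun _ => 0⟩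

/-- One step of the `Threshold-Swapping` algorithm with precision `ε`, threshold `τ`, and
rank `k`, processing the arriving element `e`.  An arriving element `e` with weight
`w e = f(e | S') < (ε/k)·τ` is ignored (and recorded in `F`); otherwise the step coincides
with a step of the `Swapping` algorithm.  Ties in the choice of the minimum-weight swap
candidate may be broken arbitrarily. -/
inductive TSStep (f : Finset α → ℝ) (M : MatroidOn α) (ε τ : ℝ) (k : ℕ) :
    TSState α → α → TSState α → Prop
  | ignore {st : TSState α} {e : α} (hfail : marg f st.S' e < ε / (k : ℝ) * τ) :
      TSStep f M ε τ k st e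
        ⟨st.S, st.S', insert e st.F, Function.update st.w e (marg f st.S' e)⟩
  | add {st : TSState α} {e : α} (hpass : ¬ marg f st.S' e < ε / (k : ℝ) * τ)
      (hind : M.Indep (insert e st.S)) :
      TSStep f M ε τ k st e
        ⟨insert e st.S, insert e st.S', st.F, Function.update st.w e (marg f st.S' e)⟩
  | swap {st : TSState α} {e y : α} (hpass : ¬ marg f st.S' e < ε / (k : ℝ) * τ)
      (hdep : ¬ M.Indep (insert e st.S))
      (hy : y ∈ st.S) (hyind : M.Indep (insert e (st.S.erase y)))
      (hmin : ∀ z ∈ st.S, M.Indep (insert e (st.S.erase z)) → st.w y ≤ st.w z)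
      (hgain : 2 * st.w y < marg f st.S' e) :
      TSStep f M ε τ k st e
        ⟨insert e (st.S.erase y), insert e st.S', st.F,
          Function.update st.w e (marg f st.S' e)⟩
  | discardLow {st : TSState α} {e y : α} (hpass : ¬ marg f st.S' e < ε / (k : ℝ) * τ)
      (hdep : ¬ M.Indep (insert e st.S))
      (hy : y ∈ st.S) (hyind : M.Indep (insert e (st.S.erase y)))
      (hmin : ∀ z ∈ st.S, M.Indep (insert e (st.S.erase z)) → st.w y ≤ st.w z)
      (hgain : ¬ 2 * st.w y < marg f st.S' e) :
      TSStep f M ε τ k st e ⟨st.S, st.S', st.F, Function.update st.w e (marg f st.S' e)⟩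
  | discardNone {st : TSState α} {e : α} (hpass : ¬ marg f st.S' e < ε / (k : ℝ) * τ)
      (hdep : ¬ M.Indep (insert e st.S))
      (h : ∀ y ∈ st.S, ¬ M.Indep (insert e (st.S.erase y))) :
      TSStep f M ε τ k st e ⟨st.S, st.S', st.F, Function.update st.w e (marg f st.S' e)⟩

/-- Run of the `Threshold-Swapping` algorithm from a given state. -/
inductive TSRunFrom (f : Finset α → ℝ) (M : MatroidOn α) (ε τ : ℝ) (k : ℕ) :
    TSState α → List α → TSState α → Prop
  | nil (st : TSState α) : TSRunFrom f M ε τ k st [] st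
  | cons {st st₁ st₂ : TSState α} {e : α} {π : List α}
      (hstep : TSStep f M ε τ k st e st₁) (hrest : TSRunFrom f M ε τ k st₁ π st₂) :
      TSRunFrom f M ε τ k st (e :: π) st₂

/-- `TSRun f M ε τ k π st` holds iff some run of `Threshold-Swapping` on the stream `π`
terminates in state `st`. -/
def TSRun (f : Finset α → ℝ) (M : MatroidOn α) (ε τ : ℝ) (k : ℕ)
    (π : List α) (st : TSState α) : Prop :=
  TSRunFrom f M ε τ k (TSState.start α) π st

/-- `M` has rank `k`: some independent set has cardinality `k` and every independent set
has cardinality at most `k`. -/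
def MatroidOn.HasRank (M : MatroidOn α) (k : ℕ) : Prop :=
  (∃ Bas : Finset α, M.Indep Bas ∧ Bas.card = k) ∧ ∀ A : Finset α, M.Indep A → A.card ≤ k

section Aux
variable {β : Type u}

lemma dep_mono (M : MatroidOn β) {A B : Finset β} (h : A ⊆ B) (hA : ¬ M.Indep A) :
    ¬ M.Indep B := fun hB => hA (M.subset_indep h hB)

/-- Exchange lemma: if `T ∪ {e,o}` is independent and `T ∪ {y}` is independent, then
`e` or `o` can be added to `T ∪ {y}` keeping independence. -/
lemma lemX (M : MatroidOn β) {T : Finset β} {e o y : β}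
    (h1 : M.Indep (insert o (insert e T)))
    (h2 : M.Indep (insert y T))
    (h3 : ¬ M.Indep (insert e (insert y T)))
    (h4 : ¬ M.Indep (insert o (insert y T)))
    (heT : e ∉ T) (hoT : o ∉ insert e T) : False := by
  have hcard : (insert y T).card < (insert o (insert e T)).card := by
    rw [card_insert_of_notMem hoT, card_insert_of_notMem heT]
    calc (insert y T).card ≤ T.card + 1 := card_insert_le _ _
      _ < T.card + 1 + 1 := by omega
  obtain ⟨z, hz1, hz2, hz3⟩ := M.augment h2 h1 hcard
  rcases mem_insert.mp hz1 with rfl | hz1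
  · exact h4 hz3
  · rcases mem_insert.mp hz1 with rfl | hz1
    · exact h3 hz3
    · exact hz2 (mem_insert_of_mem hz1)

/-- The fundamental-circuit lemma: if `o ∈ span S` then `o` together with all its
swap candidates in `S` forms a dependent set. -/
lemma circuit_dep (M : MatroidOn β) {S : Finset β} {o : β} (hS : M.Indep S) (ho : o ∉ S)
    (hdep : ¬ M.Indep (insert o S)) :
    ¬ M.Indep (insert o (S.filter fun y => M.Indep (insert o (S.erase y)))) := by
  intro h
  set cand := S.filter fun y => M.Indep (insert o (S.erase y)) with hcand
  set P := (insert o S).powerset.filter fun A => insert o cand ⊆ A ∧ M.Indep A with hP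
  have hmem : insert o cand ∈ P := by
    refine mem_filter.mpr ⟨mem_powerset.mpr ?_, Subset.rfl, h⟩
    exact insert_subset_insert _ (filter_subset _ _)
  obtain ⟨A, hAP, hAmax⟩ := P.exists_max_image card ⟨_, hmem⟩
  have hAP' := mem_filter.mp hAP
  have hAsub : A ⊆ insert o S := mem_powerset.mp hAP'.1
  obtain ⟨hAcand, hAind⟩ := hAP'.2
  have hmax : ∀ z ∈ insert o S, z ∉ A → ¬ M.Indep (insert z A) := by
    intro z hzS hzA hind
    have : insert z A ∈ P := mem_filter.mpr ⟨mem_powerset.mpr (insert_subset hzS hAsub),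
      hAcand.trans (subset_insert _ _), hind⟩
    have := hAmax _ this
    rw [card_insert_of_notMem hzA] at this; omega
  have hcardA : S.card ≤ A.card := by
    by_contra hlt
    push_neg at hlt
    obtain ⟨z, hz1, hz2, hz3⟩ := M.augment hAind hS hlt
    exact hmax z (mem_insert_of_mem hz1) hz2 hz3
  -- A ⊆ insert o S, A ≠ insert o S, so A misses some y ∈ S
  have hAne : A ≠ insert o S := fun hEq => hdep (hEq ▸ hAind)
  obtain ⟨y, hyS, hyA⟩ : ∃ y ∈ S, y ∉ A := by
    by_contra hall
    push_neg at hall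
    exact hAne (Subset.antisymm hAsub (insert_subset (hAcand (mem_insert_self _ _)) hall))
  have hAsub' : A ⊆ insert o (S.erase y) := by
    intro x hx
    rcases mem_insert.mp (hAsub hx) with rfl | hxS
    · exact mem_insert_self _ _
    · exact mem_insert_of_mem (mem_erase.mpr ⟨fun hEq => hyA (hEq ▸ hx), hxS⟩)
  have : M.Indep (insert o (S.erase y)) := by
    have hcards : (insert o (S.erase y)).card ≤ A.card := by
      have h1 : (insert o (S.erase y)).card ≤ (S.erase y).card + 1 := card_insert_le _ _
      rw [card_erase_of_mem hyS] at h1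
      have : 1 ≤ S.card := card_pos.mpr ⟨y, hyS⟩
      omega
    rwa [eq_of_subset_of_card_le hAsub' hcards] at hAind
  exact hyA (hAcand (mem_insert_of_mem (mem_filter.mpr ⟨hyS, this⟩)))

/-- Matching lemma: elements of an independent set `D`, each spanned by `S`,
can be injectively matched to swap candidates in `S`. -/
lemma matching (M : MatroidOn β) {S D : Finset β} (hS : M.Indep S) (hD : M.Indep D)
    (hdisj : ∀ o ∈ D, o ∉ S) (hdep : ∀ o ∈ D, ¬ M.Indep (insert o S)) :
    ∃ φ : {x // x ∈ D} → β, Function.Injective φ ∧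
      ∀ o : {x // x ∈ D}, φ o ∈ S ∧ M.Indep (insert o.val (S.erase (φ o))) := by
  set t : {x // x ∈ D} → Finset β :=
    fun o => S.filter fun y => M.Indep (insert o.val (S.erase y)) with ht
  have hall : ∀ s : Finset {x // x ∈ D}, s.card ≤ (s.biUnion t).card := by
    intro s
    set N := s.biUnion t with hN
    have hNS : N ⊆ S := by
      intro x hx
      obtain ⟨o, _, hx⟩ := mem_biUnion.mp hx
      exact (mem_filter.mp hx).1
    have hNind : M.Indep N := M.subset_indep hNS hS
    set D' := s.image Subtype.val with hD'
    have hcard : D'.card = s.card := card_image_of_injective s Subtype.val_injective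
    have hD'sub : D' ⊆ D := by
      intro x hx; obtain ⟨o, _, rfl⟩ := mem_image.mp hx; exact o.prop
    have hD'ind : M.Indep D' := M.subset_indep hD'sub hD
    by_contra hlt
    push_neg at hlt
    obtain ⟨z, hz1, hz2, hz3⟩ := M.augment hNind hD'ind (by omega)
    obtain ⟨o, hos, rfl⟩ := mem_image.mp hz1
    have hto : t o ⊆ N := subset_biUnion_of_mem t hos
    refine circuit_dep M hS (hdisj _ o.prop) (hdep _ o.prop) ?_
    exact M.subset_indep (insert_subset_insert _ hto) hz3
  obtain ⟨φ, hinj, hmem⟩ := (Finset.all_card_le_biUnion_card_iff_exists_injective t).mp hall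
  exact ⟨φ, hinj, fun o => ⟨(mem_filter.mp (hmem o)).1, (mem_filter.mp (hmem o)).2⟩⟩


/-- The key per-element invariant for elements that were discarded after passing the
threshold test: they cannot be added to `S`, their weight is nonnegative, and every
swap candidate has at least half their weight. -/
def ClaimA (M : MatroidOn β) (st : TSState β) (o : β) : Prop :=
  ¬ M.Indep (insert o st.S) ∧ 0 ≤ st.w o ∧
    ∀ y ∈ st.S, M.Indep (insert o (st.S.erase y)) → st.w o ≤ 2 * st.w y

/-- The global invariant maintained by the algorithm. -/
def Good (M : MatroidOn β) (seen : Finset β) (st : TSState β) : Prop :=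
  st.S ⊆ st.S' ∧ st.S' ⊆ seen ∧ st.F ⊆ seen ∧ M.Indep st.S ∧
    (∀ y ∈ st.S', 0 ≤ st.w y) ∧ ∀ o ∈ seen, o ∉ st.S' → o ∉ st.F → ClaimA M st o

lemma step_good {f : Finset β → ℝ} {M : MatroidOn β} {ε τ : ℝ} {k : ℕ}
    (hthr : 0 ≤ ε / (k : ℝ) * τ) {seen : Finset β} {st st₁ : TSState β} {e : β}
    (he : e ∉ seen) (hg : Good M seen st) (hstep : TSStep f M ε τ k st e st₁) :
    Good M (insert e seen) st₁ := by
  obtain ⟨hSS', hS's, hFs, hSind, hpos, hA⟩ := hg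
  have heS' : e ∉ st.S' := fun h => he (hS's h)
  have heS : e ∉ st.S := fun h => heS' (hSS' h)
  have heF : e ∉ st.F := fun h => he (hFs h)
  have wupd : ∀ (v : ℝ) (x : β), x ≠ e → Function.update st.w e v x = st.w x :=
    fun v x hx => Function.update_of_ne hx _ _
  cases hstep with
  | ignore hfail =>
    refine ⟨hSS', hS's.trans (subset_insert _ _), insert_subset_insert e hFs, hSind, ?_, ?_⟩
    · intro y hy
      dsimp only at hy ⊢
      rw [wupd _ y (fun h => heS' (h ▸ hy))]
      exact hpos y hy
    · intro o ho hoS' hoF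
      dsimp only at hoS' hoF ⊢
      have hoe : o ≠ e := fun h => hoF (h ▸ mem_insert_self e st.F)
      have hoseen : o ∈ seen := (mem_insert.mp ho).resolve_left hoe
      obtain ⟨c1, c2, c3⟩ := hA o hoseen hoS' (fun h => hoF (mem_insert_of_mem h))
      refine ⟨c1, by dsimp only; rw [wupd _ o hoe]; exact c2, ?_⟩
      intro y hy hyind
      dsimp only at hy hyind ⊢
      rw [wupd _ o hoe, wupd _ y (fun h => heS (h ▸ hy))]
      exact c3 y hy hyind
  | add hpass hind =>
    have hwe : 0 ≤ marg f st.S' e := le_trans hthr (not_lt.mp hpass)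
    refine ⟨insert_subset_insert e hSS', insert_subset_insert e hS's,
      hFs.trans (subset_insert _ _), hind, ?_, ?_⟩
    · intro y hy
      dsimp only at hy ⊢
      rcases mem_insert.mp hy with rfl | hy
      · rw [Function.update_self]; exact hwe
      · rw [wupd _ y (fun h => heS' (h ▸ hy))]; exact hpos y hy
    · intro o ho hoS' hoF
      dsimp only at hoS' hoF ⊢
      have hoe : o ≠ e := fun h => hoS' (h ▸ mem_insert_self e st.S')
      have hoseen : o ∈ seen := (mem_insert.mp ho).resolve_left hoe
      obtain ⟨c1, c2, c3⟩ := hA o hoseen (fun h => hoS' (mem_insert_of_mem h)) hoF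
      refine ⟨dep_mono M (insert_subset_insert o (subset_insert e st.S)) c1,
        by dsimp only; rw [wupd _ o hoe]; exact c2, ?_⟩
      intro y hy hyind
      dsimp only at hy hyind ⊢
      rcases mem_insert.mp hy with rfl | hyS
      · rw [erase_insert heS] at hyind
        exact absurd hyind c1
      · have hyne : y ≠ e := fun h => heS (h ▸ hyS)
        rw [erase_insert_of_ne (Ne.symm hyne)] at hyind
        have hyind' : M.Indep (insert o (st.S.erase y)) :=
          M.subset_indep (insert_subset_insert o (subset_insert _ _)) hyind
        rw [wupd _ o hoe, wupd _ y hyne]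
        exact c3 y hyS hyind'
  | @swap y0 hpass hdep hy0 hy0ind hmin hgain =>
    have hwe : 0 ≤ marg f st.S' e := le_trans hthr (not_lt.mp hpass)
    refine ⟨insert_subset_insert e ((erase_subset _ _).trans hSS'),
      insert_subset_insert e hS's, hFs.trans (subset_insert _ _), hy0ind, ?_, ?_⟩
    · intro y hy
      dsimp only at hy ⊢
      rcases mem_insert.mp hy with rfl | hy
      · rw [Function.update_self]; exact hwe
      · rw [wupd _ y (fun h => heS' (h ▸ hy))]; exact hpos y hy
    · intro o ho hoS'₁ hoF
      dsimp only at hoS'₁ hoF ⊢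
      have hoe : o ≠ e := fun h => hoS'₁ (h ▸ mem_insert_self e st.S')
      have hoseen : o ∈ seen := (mem_insert.mp ho).resolve_left hoe
      have hoS' : o ∉ st.S' := fun h => hoS'₁ (mem_insert_of_mem h)
      have hoS : o ∉ st.S := fun h => hoS' (hSS' h)
      obtain ⟨c1, c2, c3⟩ := hA o hoseen hoS' hoF
      have heT : e ∉ st.S.erase y0 := fun h => heS (mem_of_mem_erase h)
      refine ⟨?_, by dsimp only; rw [wupd _ o hoe]; exact c2, ?_⟩
      · intro hcon
        refine lemX M (T := st.S.erase y0) (e := e) (o := o) (y := y0) hcon ?_ ?_ ?_ heT ?_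
        · rw [insert_erase hy0]; exact hSind
        · rw [insert_erase hy0]; exact hdep
        · rw [insert_erase hy0]; exact c1
        · intro h
          rcases mem_insert.mp h with h | h
          · exact hoe h
          · exact hoS (mem_of_mem_erase h)
      · intro z hz hzind
        dsimp only at hz hzind ⊢
        rcases mem_insert.mp hz with rfl | hz
        · rw [erase_insert heT] at hzind
          have hc := c3 y0 hy0 hzind
          rw [wupd _ o hoe, Function.update_self]
          linarith [hgain, hwe]
        · have hzS : z ∈ st.S := mem_of_mem_erase hz
          have hzy0 : z ≠ y0 := (mem_erase.mp hz).1
          have hze : z ≠ e := fun h => heS (h ▸ hzS)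
          rw [wupd _ o hoe, wupd _ z hze]
          rw [erase_insert_of_ne (Ne.symm hze)] at hzind
          set T' := (st.S.erase y0).erase z with hT'
          by_cases hc : M.Indep (insert o (st.S.erase z))
          · exact c3 z hzS hc
          · have hoT' : o ∉ T' := fun h => hoS (mem_of_mem_erase (mem_of_mem_erase h))
            have heT' : e ∉ T' := fun h => heS (mem_of_mem_erase (mem_of_mem_erase h))
            have h5 : insert y0 T' = st.S.erase z := by
              rw [hT', erase_right_comm, insert_erase (mem_erase.mpr ⟨Ne.symm hzy0, hy0⟩)]
            have h6 : insert z T' = st.S.erase y0 := by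
              rw [hT', insert_erase hz]
            have hA' : M.Indep (insert o T') :=
              M.subset_indep (insert_subset_insert o (subset_insert _ _)) hzind
            have hcard : (insert o T').card < st.S.card := by
              have h2 : 1 < st.S.card := one_lt_card.mpr ⟨z, hzS, y0, hy0, hzy0⟩
              rw [card_insert_of_notMem hoT', hT', card_erase_of_mem hz,
                card_erase_of_mem hy0]
              omega
            obtain ⟨u, huS, huT, hu⟩ := M.augment hA' hSind hcard
            have hucase : u = y0 ∨ u = z := by
              by_contra hcon
              push_neg at hcon
              exact huT (mem_insert_of_mem (mem_erase.mpr ⟨hcon.2,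
                mem_erase.mpr ⟨hcon.1, huS⟩⟩))
            have hy0cand : M.Indep (insert o (st.S.erase y0)) := by
              rcases hucase with rfl | rfl
              · exfalso
                apply hc
                have heq : insert u (insert o T') = insert o (st.S.erase z) := by
                  rw [Finset.insert_comm, h5]
                exact heq ▸ hu
              · have heq : insert u (insert o T') = insert o (st.S.erase y0) := by
                  rw [Finset.insert_comm, h6]
                exact heq ▸ hu
            have hwy0 : st.w o ≤ 2 * st.w y0 := c3 y0 hy0 hy0cand
            by_cases hez : M.Indep (insert e (st.S.erase z))
            · have := hmin z hzS hez
              linarith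
            · exfalso
              refine lemX M (T := T') (e := e) (o := o) (y := y0) hzind ?_ ?_ ?_ heT' ?_
              · rw [h5]; exact M.subset_indep (erase_subset _ _) hSind
              · rw [h5]; exact hez
              · rw [h5]; exact hc
              · intro h
                rcases mem_insert.mp h with h | h
                · exact hoe h
                · exact hoT' h
  | @discardLow y0 hpass hdep hy0 hy0ind hmin hgain =>
    have hwe : 0 ≤ marg f st.S' e := le_trans hthr (not_lt.mp hpass)
    refine ⟨hSS', hS's.trans (subset_insert _ _), hFs.trans (subset_insert _ _), hSind, ?_, ?_⟩
    · intro y hy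
      dsimp only at hy ⊢
      rw [wupd _ y (fun h => heS' (h ▸ hy))]
      exact hpos y hy
    · intro o ho hoS' hoF
      dsimp only at hoS' hoF ⊢
      by_cases hoe : o = e
      · subst hoe
        refine ⟨hdep, by dsimp only; rw [Function.update_self]; exact hwe, ?_⟩
        intro z hzS hzind
        dsimp only at hzS hzind ⊢
        rw [Function.update_self, wupd _ z (fun h => heS (h ▸ hzS))]
        have h1 := hmin z hzS hzind
        have h2 := not_lt.mp hgain
        linarith
      · have hoseen : o ∈ seen := (mem_insert.mp ho).resolve_left hoe
        obtain ⟨c1, c2, c3⟩ := hA o hoseen hoS' hoF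
        refine ⟨c1, by dsimp only; rw [wupd _ o hoe]; exact c2, ?_⟩
        intro y hy hyind
        dsimp only at hy hyind ⊢
        rw [wupd _ o hoe, wupd _ y (fun h => heS (h ▸ hy))]
        exact c3 y hy hyind
  | discardNone hpass hdep h =>
    have hwe : 0 ≤ marg f st.S' e := le_trans hthr (not_lt.mp hpass)
    refine ⟨hSS', hS's.trans (subset_insert _ _), hFs.trans (subset_insert _ _), hSind, ?_, ?_⟩
    · intro y hy
      dsimp only at hy ⊢
      rw [wupd _ y (fun h => heS' (h ▸ hy))]
      exact hpos y hy
    · intro o ho hoS' hoF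
      dsimp only at hoS' hoF ⊢
      by_cases hoe : o = e
      · subst hoe
        refine ⟨hdep, by dsimp only; rw [Function.update_self]; exact hwe, ?_⟩
        intro z hzS hzind
        dsimp only at hzS hzind ⊢
        exact absurd hzind (h z hzS)
      · have hoseen : o ∈ seen := (mem_insert.mp ho).resolve_left hoe
        obtain ⟨c1, c2, c3⟩ := hA o hoseen hoS' hoF
        refine ⟨c1, by dsimp only; rw [wupd _ o hoe]; exact c2, ?_⟩
        intro y hy hyind
        dsimp only at hy hyind ⊢
        rw [wupd _ o hoe, wupd _ y (fun h => heS (h ▸ hy))]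
        exact c3 y hy hyind

lemma run_good {f : Finset β → ℝ} {M : MatroidOn β} {ε τ : ℝ} {k : ℕ}
    (hthr : 0 ≤ ε / (k : ℝ) * τ) :
    ∀ {π : List β} {seen : Finset β} {st st' : TSState β}, π.Nodup →
      (∀ x ∈ π, x ∉ seen) → Good M seen st → TSRunFrom f M ε τ k st π st' →
      Good M (seen ∪ π.toFinset) st' := by
  intro π
  induction π with
  | nil =>
    intro seen st st' _ _ hg hrun
    cases hrun
    simpa using hg
  | cons e π ih =>
    intro seen st st' hnd hnot hg hrun
    cases hrun with
    | cons hstep hrest =>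
      have h1 := step_good hthr (hnot e (List.mem_cons_self)) hg hstep
      have h2 := ih (List.nodup_cons.mp hnd).2 (fun x hx hmem => by
          rcases mem_insert.mp hmem with rfl | hmem
          · exact (List.nodup_cons.mp hnd).1 hx
          · exact hnot x (List.mem_cons_of_mem _ hx) hmem) h1 hrest
      rw [List.toFinset_cons, union_insert]
      rwa [insert_union] at h2

end Aux

theorem threshold_swapping_weight_outside_le_twice_solution
    (f : Finset α → ℝ) (M : MatroidOn α)
    (hmono : MonotoneFn f) (hnorm : f ∅ = 0) (hsub : SubmodularFn f)
    (k : ℕ) (hrank : M.HasRank k)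
    (ε τ : ℝ) (hε : 0 < ε) (hτ0 : 0 ≤ τ)
    (π : List α) (hdist : π.Nodup)
    (OPT : Finset α) (hOPTmem : ∀ x ∈ OPT, x ∈ π) (hOPTind : M.Indep OPT)
    (hOPTmax : ∀ T : Finset α, (∀ x ∈ T, x ∈ π) → M.Indep T → f T ≤ f OPT)
    (st : TSState α) (hrun : TSRun f M ε τ k π st) :
    (OPT \ (st.S' ∪ st.F)).sum st.w ≤ 2 * st.S.sum st.w := by
  have hI : ‹DecidableEq α› = fun a b => Classical.propDecidable (a = b) :=
    Subsingleton.elim _ _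
  subst hI
  have hthr : 0 ≤ ε / (k : ℝ) * τ := mul_nonneg (div_nonneg hε.le (Nat.cast_nonneg k)) hτ0
  have hg0 : Good M ∅ (TSState.start α) := by
    obtain ⟨A, hAind⟩ := M.nonempty
    exact ⟨Subset.rfl, Subset.rfl, Subset.rfl, M.subset_indep (empty_subset A) hAind,
      fun y hy => absurd hy (notMem_empty y), fun o ho => absurd ho (notMem_empty o)⟩
  have hgood := run_good hthr hdist (fun x _ => notMem_empty x) hg0 hrun
  rw [Finset.empty_union] at hgood
  obtain ⟨hSS', hS's, hFs, hSind, hpos, hA⟩ := hgood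
  set D := OPT \ (st.S' ∪ st.F) with hD
  have hclaims : ∀ o ∈ D, ClaimA M st o := by
    intro o ho
    obtain ⟨hoO, hoSF⟩ := mem_sdiff.mp ho
    exact hA o (List.mem_toFinset.mpr (hOPTmem o hoO))
      (fun h => hoSF (mem_union_left _ h)) (fun h => hoSF (mem_union_right _ h))
  have hDind : M.Indep D := M.subset_indep (sdiff_subset) hOPTind
  have hdisj : ∀ o ∈ D, o ∉ st.S := fun o ho h =>
    (mem_sdiff.mp ho).2 (mem_union_left _ (hSS' h))
  obtain ⟨φ, hinj, hφ⟩ := matching M hSind hDind hdisj (fun o ho => (hclaims o ho).1)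
  calc D.sum st.w = ∑ o ∈ D.attach, st.w o.1 := (sum_attach D st.w).symm
    _ ≤ ∑ o ∈ D.attach, 2 * st.w (φ o) := by
        refine sum_le_sum fun o _ => ?_
        exact (hclaims o.1 o.2).2.2 (φ o) (hφ o).1 (hφ o).2
    _ = 2 * ∑ o ∈ D.attach, st.w (φ o) := by rw [mul_sum]
    _ = 2 * ∑ y ∈ D.attach.image φ, st.w y := by
        rw [sum_image (fun a _ b _ h => hinj h)]
    _ ≤ 2 * st.S.sum st.w := by
        have hsub : D.attach.image φ ⊆ st.S := by
          intro y hy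
          obtain ⟨o, _, rfl⟩ := mem_image.mp hy
          exact (hφ o).1
        have := sum_le_sum_of_subset_of_nonneg hsub (fun y hy _ => hpos y (hSS' hy))
        linarith
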